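/- Let 1 < p < 2 and let φ be defined by φ(s)(1+φ(s))^{p-2} = p^{p-2}s for s ≥ 0, φ(s) ≥ 0. Then φ(s) ≥ s^{1/(p-1)} whenever 0 ≤ s ≤ (p-1)^{1-p}, and φ(s) < s^{1/(p-1)} whenever s > (p-1)^{1-p}. -/
import Mathlib

open Real Set

lemma aux_mono (p : ℝ) (hp1 : 1 < p) (hp2 : p < 2) :
    StrictMonoOn (fun u : ℝ => u * (1 + u) ^ (p - 2)) (Set.Ici 0) := by
  apply strictMonoOn_of_deriv_pos (convex_Ici 0)
  · apply ContinuousOn.mul continuousOn_id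
    apply ContinuousOn.rpow_const (by fun_prop)
    intro x hx
    left
    have : (0:ℝ) < 1 + x := by simp at hx; linarith
    exact this.ne'
  · intro x hx
    rw [interior_Ici] at hx
    have hx0 : (0:ℝ) < x := hx
    have h1x : (0:ℝ) < 1 + x := by linarith
    have hD : HasDerivAt (fun u : ℝ => u * (1 + u) ^ (p - 2))
        (1 * (1 + x) ^ (p - 2) + x * ((p - 2) * (1 + x) ^ (p - 2 - 1) * 1)) x := by
      have h1 : HasDerivAt (fun u : ℝ => 1 + u) 1 x := by
        simpa using (hasDerivAt_id x).const_add 1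
      have h2 : HasDerivAt (fun u : ℝ => (1 + u) ^ (p - 2))
          ((p - 2) * (1 + x) ^ (p - 2 - 1) * 1) x :=
        (Real.hasDerivAt_rpow_const (Or.inl h1x.ne')).comp x h1
      exact (hasDerivAt_id x).mul h2
    rw [hD.deriv]
    have key : (1 + x) ^ (p - 2) = (1 + x) ^ (p - 2 - 1) * (1 + x) := by
      rw [← Real.rpow_add_one h1x.ne']; ring_nf
    rw [key]
    have hpos : (0:ℝ) < (1 + x) ^ (p - 2 - 1) := Real.rpow_pos_of_pos h1x _
    have heq : 1 * ((1 + x) ^ (p - 2 - 1) * (1 + x)) + x * ((p - 2) * (1 + x) ^ (p - 2 - 1) * 1)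
        = (1 + x) ^ (p - 2 - 1) * (1 + (p - 1) * x) := by ring
    rw [heq]
    have : (0:ℝ) < 1 + (p - 1) * x := by nlinarith
    positivity

theorem stmt_2 (p : ℝ) (hp1 : 1 < p) (hp2 : p < 2) (φ : ℝ → ℝ)
    (hφ0 : ∀ s, 0 ≤ s → 0 ≤ φ s)
    (hφ : ∀ s, 0 ≤ s → φ s * (1 + φ s) ^ (p - 2) = p ^ (p - 2) * s) :
    (∀ s, 0 ≤ s → s ≤ (p - 1) ^ (1 - p) → s ^ (1 / (p - 1)) ≤ φ s) ∧
    (∀ s, (p - 1) ^ (1 - p) < s → φ s < s ^ (1 / (p - 1))) := by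
  have hp0 : (0:ℝ) < p := by linarith
  have hpm1 : (0:ℝ) < p - 1 := by linarith
  have hpm2 : p - 2 < 0 := by linarith
  have hmono := aux_mono p hp1 hp2
  have hbound : (p - 1) ^ (1 - p) = ((p - 1)⁻¹ : ℝ) ^ (p - 1) := by
    rw [Real.inv_rpow hpm1.le, ← Real.rpow_neg hpm1.le, show -(p-1) = 1-p by ring]
  have hrw : ∀ t : ℝ, 0 < t → p ^ (p - 2) * t ^ (p - 1) = t * (p * t) ^ (p - 2) := by
    intro t ht
    rw [Real.mul_rpow hp0.le ht.le, show p - 1 = (p - 2) + 1 by ring,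
      Real.rpow_add_one ht.ne']
    ring
  constructor
  · intro s hs hsle
    rcases hs.eq_or_lt with rfl | hs0
    · rw [Real.zero_rpow (by positivity : 1 / (p-1) ≠ 0)]
      exact hφ0 0 le_rfl
    · set t := s ^ (1 / (p - 1)) with hT
      have ht : 0 < t := Real.rpow_pos_of_pos hs0 _
      have hts : t ^ (p - 1) = s := by
        rw [hT, ← Real.rpow_mul hs0.le, one_div, inv_mul_cancel₀ hpm1.ne', Real.rpow_one]
      have ht_le : t ≤ (p - 1)⁻¹ := by
        rw [← Real.rpow_le_rpow_iff ht.le (by positivity : (0:ℝ) ≤ (p-1)⁻¹) hpm1, hts,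
          ← hbound]
        exact hsle
      have hpt : p * t ≤ 1 + t := by
        have h1 : (p - 1) * t ≤ (p - 1) * (p - 1)⁻¹ := by
          exact mul_le_mul_of_nonneg_left ht_le hpm1.le
        rw [mul_inv_cancel₀ hpm1.ne'] at h1
        linarith
      have hft : t * (1 + t) ^ (p - 2) ≤ p ^ (p - 2) * s := by
        rw [← hts, hrw t ht]
        have hle : (1 + t) ^ (p - 2) ≤ (p * t) ^ (p - 2) :=
          Real.rpow_le_rpow_of_nonpos (by positivity) hpt hpm2.le
        exact mul_le_mul_of_nonneg_left hle ht.le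
      by_contra h
      push_neg at h
      have := hmono (hφ0 s hs) (mem_Ici.mpr ht.le) h
      simp only at this
      rw [hφ s hs] at this
      exact absurd hft (by linarith)
  · intro s hslt
    have hb0 : (0:ℝ) < (p - 1) ^ (1 - p) := Real.rpow_pos_of_pos hpm1 _
    have hs0 : 0 < s := hb0.trans hslt
    set t := s ^ (1 / (p - 1)) with hT
    have ht : 0 < t := Real.rpow_pos_of_pos hs0 _
    have hts : t ^ (p - 1) = s := by
      rw [hT, ← Real.rpow_mul hs0.le, one_div, inv_mul_cancel₀ hpm1.ne', Real.rpow_one]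
    have ht_gt : (p - 1)⁻¹ < t := by
      rw [← Real.rpow_lt_rpow_iff (by positivity : (0:ℝ) ≤ (p-1)⁻¹) ht.le hpm1, hts, ← hbound]
      exact hslt
    have hpt : 1 + t < p * t := by
      have h1 : (p - 1) * (p - 1)⁻¹ < (p - 1) * t := mul_lt_mul_of_pos_left ht_gt hpm1
      rw [mul_inv_cancel₀ hpm1.ne'] at h1
      linarith
    have hft : p ^ (p - 2) * s < t * (1 + t) ^ (p - 2) := by
      rw [← hts, hrw t ht]
      have hlt : (p * t) ^ (p - 2) < (1 + t) ^ (p - 2) :=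
        Real.rpow_lt_rpow_of_neg (by positivity) hpt hpm2
      exact mul_lt_mul_of_pos_left hlt ht
    by_contra h
    push_neg at h
    have := hmono.monotoneOn (mem_Ici.mpr ht.le) (hφ0 s hs0.le) h
    rw [hφ s hs0.le] at this
    exact absurd hft (by linarith)
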